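/- arXiv:1602.01886 — 5 statements merged into one kernel-verified Lean document; each statement's English description precedes it below -/
import Mathlib

section
/- For the coordinate descent iteration q_{k+1} = q_k - ∇_i f(q_k) e_i applied to f with initialization q_0 = 0 and s ≥ 0, at every iteration we have q_{k+1} ≥ q_k ≥ 0 and ∇f(q_k) ≤ 0 componentwise, provided the coordinate i chosen at each step satisfies ∇_i f(q_k) < 0. -/
/-!
Write `r = Q q - b` for the gradient. A coordinate step `q ↦ q - r_i e_i` changes it to
`r - r_i Q e_i`, whose `j`-th entry is `r_j - r_i Q_{ji}`. Since `Q_{ji} ≤ δ_{ji}` entrywise (the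
off-diagonal entries are nonpositive and the diagonal ones at most `1`), a nonpositive gradient
stays nonpositive; it starts as `-b ≤ 0` at `q_0 = 0`. Choosing coordinates with `r_i < 0`
makes every step increase `q`, so the iterates are monotone and stay above `q_0 = 0`.
-/

open Matrix Function

section CoordinateDescent

variable {ι R : Type*} [DecidableEq ι]

theorem Matrix.mulVec_update_sub [Fintype ι] [CommRing R] (Q : Matrix ι ι R) (q : ι → R) (i : ι)
    (c : R) :
    Q *ᵥ update q i (q i - c) = Q *ᵥ q - c • Q.col i := by
  rw [Pi.update_eq_sub_add_single, sub_add, ← Pi.single_sub, sub_sub_cancel, mulVec_sub,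
    mulVec_single, op_smul_eq_smul]

theorem le_update_sub_of_nonpos [AddCommGroup R] [PartialOrder R] [IsOrderedAddMonoid R]
    (q : ι → R) (i : ι) {c : R} (hc : c ≤ 0) :
    q ≤ update q i (q i - c) :=
  le_update_iff.2 ⟨(le_sub_self_iff _).2 hc, fun _ _ => le_rfl⟩

theorem sub_smul_col_nonpos [CommRing R] [PartialOrder R] [IsOrderedRing R] {Q : Matrix ι ι R}
    (hQ : ∀ j l, Q j l ≤ (1 : Matrix ι ι R) j l) {r : ι → R} (hr : r ≤ 0) (i : ι) :
    r - r i • Q.col i ≤ 0 := by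
  intro j
  simp only [Pi.sub_apply, Pi.smul_apply, col_apply, smul_eq_mul, Pi.zero_apply]
  rcases eq_or_ne j i with rfl | hji
  · have hQjj := hQ j j
    rw [one_apply_eq] at hQjj
    calc r j - r j * Q j j = r j * (1 - Q j j) := by ring
      _ ≤ 0 := mul_nonpos_of_nonpos_of_nonneg (hr j) (sub_nonneg.2 hQjj)
  · have hQji := hQ j i
    rw [one_apply_ne hji] at hQji
    exact sub_nonpos_of_le ((hr j).trans (mul_nonneg_of_nonpos_of_nonpos (hr i) hQji))

theorem mulVec_sub_nonpos_of_coordinate_descent [Fintype ι] [CommRing R] [PartialOrder R]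
    [IsOrderedRing R] {Q : Matrix ι ι R} (hQ : ∀ j l, Q j l ≤ (1 : Matrix ι ι R) j l)
    {b : ι → R} (hb : 0 ≤ b) {q : ℕ → ι → R} {i : ℕ → ι} (hq0 : q 0 = 0)
    (hupd : ∀ k, q (k + 1) = update (q k) (i k) (q k (i k) - (Q *ᵥ q k - b) (i k))) (k : ℕ) :
    Q *ᵥ q k - b ≤ 0 := by
  induction k with
  | zero => simpa [hq0] using hb
  | succ k ih =>
    rw [hupd k, mulVec_update_sub, sub_right_comm]
    exact sub_smul_col_nonpos hQ ih (i k)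

theorem diagonal_mul_mul_diagonal_nonneg [Fintype ι] [Semiring R] [PartialOrder R]
    [IsOrderedRing R] {d e : ι → R} (hd : 0 ≤ d) (he : 0 ≤ e) {A : Matrix ι ι R}
    (hA : ∀ j l, 0 ≤ A j l) (j l : ι) :
    0 ≤ (diagonal d * A * diagonal e) j l := by
  rw [mul_diagonal, diagonal_mul]
  exact mul_nonneg (mul_nonneg (hd j) (hA j l)) (he l)

theorem smul_one_add_smul_one_sub_le_one {𝕜 : Type*} [Field 𝕜] [LinearOrder 𝕜]
    [IsStrictOrderedRing 𝕜] {α : 𝕜} (hα : α ≤ 1) {B : Matrix ι ι 𝕜}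
    (hB : ∀ j l, 0 ≤ B j l) (j l : ι) :
    (α • 1 + ((1 - α) / 2) • (1 - B)) j l ≤ (1 : Matrix ι ι 𝕜) j l := by
  have hδ : 0 ≤ (1 : Matrix ι ι 𝕜) j l := by
    rw [one_apply]; split_ifs <;> norm_num
  simp only [Matrix.add_apply, Matrix.smul_apply, Matrix.sub_apply, smul_eq_mul]
  nlinarith [hB j l]

end CoordinateDescent

theorem coordinate_descent_monotone_nonneg_gradient_general {n : ℕ}
    (A : Matrix (Fin n) (Fin n) ℝ)
    (hAnn : ∀ i j, 0 ≤ A i j)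
    (d : Fin n → ℝ)
    (α : ℝ) (hα : α ∈ Set.Ioo (0 : ℝ) 1)
    (s : Fin n → ℝ) (hs : ∀ i, 0 ≤ s i)
    (Dinvhalf : Matrix (Fin n) (Fin n) ℝ)
    (hDinvhalf : Dinvhalf = Matrix.diagonal fun i => (Real.sqrt (d i))⁻¹)
    (Q : Matrix (Fin n) (Fin n) ℝ)
    (hQ : Q = α • (1 : Matrix (Fin n) (Fin n) ℝ) +
      ((1 - α) / 2) • ((1 : Matrix (Fin n) (Fin n) ℝ) - Dinvhalf * A * Dinvhalf))
    (g : (Fin n → ℝ) → (Fin n → ℝ))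
    (hg : ∀ q, g q = Q.mulVec q - α • Dinvhalf.mulVec s)
    (q : ℕ → Fin n → ℝ) (i : ℕ → Fin n)
    (hq0 : q 0 = 0)
    (hsel : ∀ k, g (q k) (i k) < 0)
    (hupd : ∀ k, q (k + 1) = Function.update (q k) (i k) (q k (i k) - g (q k) (i k))) :
    ∀ k, (∀ j, 0 ≤ q k j) ∧ (∀ j, q k j ≤ q (k + 1) j) ∧ (∀ j, g (q k) j ≤ 0) := by
  obtain rfl : g = fun q => Q *ᵥ q - α • Dinvhalf *ᵥ s := funext hg
  have hD : 0 ≤ fun j => (Real.sqrt (d j))⁻¹ := fun j => inv_nonneg.2 (Real.sqrt_nonneg _)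
  have hQle : ∀ j l, Q j l ≤ (1 : Matrix (Fin n) (Fin n) ℝ) j l := by
    subst hQ hDinvhalf
    exact smul_one_add_smul_one_sub_le_one hα.2.le (diagonal_mul_mul_diagonal_nonneg hD hD hAnn)
  have hb : 0 ≤ α • Dinvhalf *ᵥ s := by
    refine smul_nonneg hα.1.le fun j => ?_
    rw [hDinvhalf, mulVec_diagonal]
    exact mul_nonneg (hD j) (hs j)
  have hmono : ∀ k, q k ≤ q (k + 1) := fun k =>
    hupd k ▸ le_update_sub_of_nonpos (q k) (i k) (hsel k).le
  intro k
  exact ⟨monotone_nat_of_le_succ hmono k.zero_le |>.trans' hq0.ge, hmono k,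
    mulVec_sub_nonpos_of_coordinate_descent hQle hb hq0 hupd k⟩

/-- For the coordinate descent iteration `q_{k+1} = q_k - ∇_i f(q_k) e_i` applied to
`f(q) = (1/2)⟨q,Qq⟩ - α⟨s, D^{-1/2}q⟩` with `q_0 = 0` and `s ≥ 0`, and with the chosen
coordinate satisfying `∇_{i_k} f(q_k) < 0`, every iterate satisfies
`q_{k+1} ≥ q_k ≥ 0` and `∇f(q_k) ≤ 0` componentwise. -/
theorem coordinate_descent_monotone_nonneg_gradient {n : ℕ}
    (A : Matrix (Fin n) (Fin n) ℝ) (hA : A.IsSymm)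
    (hAnn : ∀ i j, 0 ≤ A i j) (hAdiag : ∀ i, A i i = 0)
    (d : Fin n → ℝ) (hd : ∀ i, d i = ∑ j, A i j) (hdpos : ∀ i, 0 < d i)
    (α : ℝ) (hα : α ∈ Set.Ioo (0 : ℝ) 1)
    (s : Fin n → ℝ) (hs : ∀ i, 0 ≤ s i)
    (Dinvhalf : Matrix (Fin n) (Fin n) ℝ)
    (hDinvhalf : Dinvhalf = Matrix.diagonal fun i => (Real.sqrt (d i))⁻¹)
    (Q : Matrix (Fin n) (Fin n) ℝ)
    (hQ : Q = α • (1 : Matrix (Fin n) (Fin n) ℝ) +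
      ((1 - α) / 2) • ((1 : Matrix (Fin n) (Fin n) ℝ) - Dinvhalf * A * Dinvhalf))
    (g : (Fin n → ℝ) → (Fin n → ℝ))
    (hg : ∀ q, g q = Q.mulVec q - α • Dinvhalf.mulVec s)
    (q : ℕ → Fin n → ℝ) (i : ℕ → Fin n)
    (hq0 : q 0 = 0)
    (hsel : ∀ k, g (q k) (i k) < 0)
    (hupd : ∀ k, q (k + 1) = Function.update (q k) (i k) (q k (i k) - g (q k) (i k))) :
    ∀ k, (∀ j, 0 ≤ q k j) ∧ (∀ j, q k j ≤ q (k + 1) j) ∧ (∀ j, g (q k) j ≤ 0) :=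
  coordinate_descent_monotone_nonneg_gradient_general A hAnn d α hα s hs Dinvhalf hDinvhalf Q hQ g
    hg q i hq0 hsel hupd
end

section
/- For the ISTA iteration on ψ(q) = ρα‖D^{1/2}q‖₁ + f(q) initialized at q_0 = 0 with s ≥ 0 and ‖s‖_∞ ≥ ρ, the iterates satisfy q_k ≥ 0 and ∇f(q_k) ≤ 0 componentwise for all k; consequently the set S̃_k = {i : q_k(i) - ∇_i f(q_k) ≤ -ρα d_i^{1/2}} is empty at every iteration. -/
open Matrix

/-- For the ISTA iteration (with step size 1) on `ψ(q) = ρα‖D^{1/2}q‖₁ + f(q)`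
initialized at `q_0 = 0` with `s ≥ 0` and `‖s‖_∞ ≥ ρ`, the iterates satisfy
`q_k ≥ 0` and `∇f(q_k) ≤ 0` componentwise for all `k`; consequently the set
`S̃_k = {i : q_k(i) - ∇_i f(q_k) ≤ -ρα d_i^{1/2}}` is empty at every iteration. -/
theorem ista_iterates_nonneg_gradient_nonpos {n : ℕ}
    (A : Matrix (Fin n) (Fin n) ℝ) (hA : A.IsSymm)
    (hAnn : ∀ i j, 0 ≤ A i j) (hAdiag : ∀ i, A i i = 0)
    (d : Fin n → ℝ) (hd : ∀ i, d i = ∑ j, A i j) (hdpos : ∀ i, 0 < d i)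
    (α : ℝ) (hα : α ∈ Set.Ioo (0 : ℝ) 1) (ρ : ℝ) (hρ : 0 < ρ)
    (s : Fin n → ℝ) (hs : ∀ i, 0 ≤ s i) (hs1 : ∑ i, s i = 1)
    (hsρ : ∃ i, ρ ≤ |s i|)
    (Dinvhalf : Matrix (Fin n) (Fin n) ℝ)
    (hDinvhalf : Dinvhalf = Matrix.diagonal fun i => (Real.sqrt (d i))⁻¹)
    (Q : Matrix (Fin n) (Fin n) ℝ)
    (hQ : Q = α • (1 : Matrix (Fin n) (Fin n) ℝ) +
      ((1 - α) / 2) • ((1 : Matrix (Fin n) (Fin n) ℝ) - Dinvhalf * A * Dinvhalf))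
    (g : (Fin n → ℝ) → (Fin n → ℝ))
    (hg : ∀ q, g q = Q.mulVec q - α • Dinvhalf.mulVec s)
    (q : ℕ → Fin n → ℝ) (hq0 : q 0 = 0)
    -- ISTA step: q_{k+1}(i) = prox_{ρα d_i^{1/2}|·|}(q_k(i) - ∇_i f(q_k))
    (hupd : ∀ k i, q (k + 1) i =
      if ρ * α * Real.sqrt (d i) ≤ q k i - g (q k) i then
        q k i - g (q k) i - ρ * α * Real.sqrt (d i)
      else if q k i - g (q k) i ≤ -(ρ * α * Real.sqrt (d i)) then
        q k i - g (q k) i + ρ * α * Real.sqrt (d i)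
      else 0) :
    ∀ k, (∀ i, 0 ≤ q k i) ∧ (∀ i, g (q k) i ≤ 0) ∧
      {i : Fin n | q k i - g (q k) i ≤ -(ρ * α * Real.sqrt (d i))} = ∅ := by

  obtain ⟨hα0, hα1⟩ := hα
  have hcpos : ∀ i, 0 < ρ * α * Real.sqrt (d i) := by
    intro i
    have h := Real.sqrt_pos.mpr (hdpos i)
    positivity
  have hQdiag : ∀ i, Q i i = (1 + α) / 2 := by
    intro i
    simp [hQ, hDinvhalf, Matrix.add_apply, Matrix.smul_apply, Matrix.sub_apply,
      Matrix.one_apply_eq, Matrix.diagonal_mul, Matrix.mul_diagonal, hAdiag]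
    ring
  have hQoff : ∀ i j, i ≠ j → Q i j ≤ 0 := by
    intro i j hij
    have h1 : (1 : Matrix (Fin n) (Fin n) ℝ) i j = 0 := Matrix.one_apply_ne hij
    have hAij := hAnn i j
    have hsi : 0 ≤ (Real.sqrt (d i))⁻¹ := by positivity
    have hsj : 0 ≤ (Real.sqrt (d j))⁻¹ := by positivity
    have hx : Q i j = -((1 - α) / 2 * ((Real.sqrt (d i))⁻¹ * A i j * (Real.sqrt (d j))⁻¹)) := by
      simp [hQ, hDinvhalf, Matrix.add_apply, Matrix.smul_apply, Matrix.sub_apply, h1,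
        Matrix.diagonal_mul, Matrix.mul_diagonal]
    rw [hx]
    have : 0 ≤ (1 - α) / 2 * ((Real.sqrt (d i))⁻¹ * A i j * (Real.sqrt (d j))⁻¹) := by
      apply mul_nonneg (by linarith)
      apply mul_nonneg (mul_nonneg hsi hAij) hsj
    linarith
  have hgdiff : ∀ v w : Fin n → ℝ, ∀ i, g w i - g v i = ∑ j, Q i j * (w j - v j) := by
    intro v w i
    simp only [hg, Pi.sub_apply, Matrix.mulVec, dotProduct, Pi.smul_apply, smul_eq_mul,
      mul_sub, Finset.sum_sub_distrib]
    ring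
  have key : ∀ k, (∀ i, 0 ≤ q k i) ∧ (∀ i, g (q k) i ≤ 0) ∧ (∀ i, q k i ≤ q (k + 1) i) := by
    intro k
    induction k with
    | zero =>
      have hq0i : ∀ i, q 0 i = 0 := fun i => by rw [hq0]; rfl
      have hg0 : ∀ i, g (q 0) i ≤ 0 := by
        intro i
        rw [hq0, hg]
        have hsi : 0 ≤ (Real.sqrt (d i))⁻¹ := by positivity
        have hsni := hs i
        simp [hDinvhalf, Matrix.mulVec, dotProduct, Matrix.diagonal_apply,
          Finset.sum_ite_eq]
        positivity
      refine ⟨fun i => (hq0i i).ge, hg0, fun i => ?_⟩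
      rw [hupd 0 i, hq0i i]
      have h1 := hg0 i
      have h2 := hcpos i
      split_ifs <;> simp [hq0i i] <;> linarith
    | succ k ih =>
      obtain ⟨hqk, hgk, hmk⟩ := ih
      have hqk1 : ∀ i, 0 ≤ q (k + 1) i := fun i => le_trans (hqk i) (hmk i)
      have hsum_le : ∀ i, ∑ j, Q i j * (q (k + 1) j - q k j) ≤ Q i i * (q (k + 1) i - q k i) := by
        intro i
        have hstep : ∑ j, Q i j * (q (k + 1) j - q k j)
            ≤ ∑ j, if j = i then Q i i * (q (k + 1) i - q k i) else 0 := by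
          apply Finset.sum_le_sum
          intro j _
          by_cases hji : j = i
          · subst hji; simp
          · simp only [hji, if_false]
            exact mul_nonpos_of_nonpos_of_nonneg (hQoff i j (Ne.symm hji))
              (by linarith [hmk j])
        simpa using hstep
      have hgk1 : ∀ i, g (q (k + 1)) i ≤ 0 := by
        intro i
        have hd1 := hgdiff (q k) (q (k + 1)) i
        have h2 := hsum_le i
        have hQii := hQdiag i
        have hci := hcpos i
        have hup := hupd k i
        have hgki := hgk i
        have hqki := hqk i
        split_ifs at hup with hb1 hb2
        · nlinarith [mul_nonneg (by linarith : (0:ℝ) ≤ 1 - α) (by linarith : 0 ≤ -(g (q k) i))]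
        · linarith
        · nlinarith [mul_nonneg (by linarith : (0:ℝ) ≤ (1 + α) / 2) hqki]
      refine ⟨hqk1, hgk1, ?_⟩
      intro i
      have hu : q k i - g (q k) i ≤ q (k + 1) i - g (q (k + 1)) i := by
        have hd1 := hgdiff (q k) (q (k + 1)) i
        have heq : (q (k + 1) i - q k i) - ∑ j, Q i j * (q (k + 1) j - q k j)
            = ∑ j, ((if i = j then 1 else 0) - Q i j) * (q (k + 1) j - q k j) := by
          simp [sub_mul, Finset.sum_sub_distrib, Finset.sum_ite_eq]
        have hnn : 0 ≤ ∑ j, ((if i = j then 1 else 0) - Q i j) * (q (k + 1) j - q k j) := by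
          apply Finset.sum_nonneg
          intro j _
          apply mul_nonneg
          · by_cases hij : i = j
            · subst hij; rw [hQdiag]; simp; linarith
            · simp only [hij, if_false]
              linarith [hQoff i j hij]
          · linarith [hmk j]
        linarith
      have hup1 := hupd k i
      have hup2 := hupd (k + 1) i
      have hci := hcpos i
      rw [hup1, hup2]
      split_ifs <;> linarith
  intro k
  obtain ⟨h1, h2, _⟩ := key k
  refine ⟨h1, h2, ?_⟩
  rw [Set.eq_empty_iff_forall_notMem]
  intro i hi
  simp only [Set.mem_setOf_eq] at hi
  have := hcpos i
  linarith [h1 i, h2 i]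
end

section
/- For the ISTA iteration on the ℓ1-regularized PageRank objective initialized at q_0 = 0 with s ≥ 0 and ‖s‖_∞ ≥ ρ, the support sets S_k = {i : q_k(i) - ∇_i f(q_k) ≥ ρα d_i^{1/2}} are nested: S_k ⊆ S_{k+1} for all k, and hence |S_k| ≤ |S_{k+1}|. -/
open Matrix

/-! The map `q ↦ q - ∇f(q) = ((1-α)/2)(I + D^{-1/2} A D^{-1/2}) q + α D^{-1/2} s` is affine with
entrywise nonnegative matrix, hence monotone for the coordinatewise order, and soft thresholding
is monotone, so the ISTA map is monotone. Since `q₁ ≥ 0 = q₀`, the iterates increase, hence so do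
the vectors `q_k - ∇f(q_k)` whose thresholded coordinates define `S_k`. -/

/-- `prox_{τ|·|}`, written in the case split used by the ISTA update. -/
noncomputable def softThreshold (τ x : ℝ) : ℝ :=
  if τ ≤ x then x - τ else if x ≤ -τ then x + τ else 0

lemma softThreshold_zero {τ : ℝ} (hτ : 0 ≤ τ) : softThreshold τ 0 = 0 := by
  unfold softThreshold
  split_ifs <;> linarith

lemma softThreshold_mono (τ : ℝ) : Monotone (softThreshold τ) := by
  intro x y hxy
  unfold softThreshold
  split_ifs <;> linarith

lemma monotone_nat_of_succ_eq_map {β : Type*} [Preorder β] {F : β → β} (hF : Monotone F)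
    {q : ℕ → β} (hq : ∀ k, q (k + 1) = F (q k)) (h01 : q 0 ≤ q 1) : Monotone q := by
  refine monotone_nat_of_le_succ fun k => ?_
  induction k with
  | zero => exact h01
  | succ k ih =>
    calc q (k + 1) = F (q k) := hq k
      _ ≤ F (q (k + 1)) := hF ih
      _ = q (k + 2) := (hq _).symm

lemma Matrix.mulVec_mono {m n R : Type*} [Fintype n] [Semiring R] [PartialOrder R]
    [IsOrderedRing R] {B : Matrix m n R} (hB : ∀ i j, 0 ≤ B i j) : Monotone (B *ᵥ ·) :=
  fun _ _ huv i => dotProduct_le_dotProduct_of_nonneg_left huv (hB i)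

section

variable {m : Type*} [Fintype m]

lemma monotone_sub_mulVec_sub {Q : Matrix m m ℝ} [DecidableEq m] (hQ : ∀ i j, 0 ≤ (1 - Q) i j)
    (c : m → ℝ) : Monotone fun p => p - (Q *ᵥ p - c) := by
  have h : (fun p => p - (Q *ᵥ p - c)) = fun p => (1 - Q) *ᵥ p + c := by
    funext p
    rw [sub_mulVec, one_mulVec]
    abel
  rw [h]
  exact (Matrix.mulVec_mono hQ).add_const c

lemma one_sub_pageRank_nonneg [DecidableEq m] {α : ℝ} (hα : α ≤ 1) {A : Matrix m m ℝ}
    (hA : ∀ i j, 0 ≤ A i j) {w : m → ℝ} (hw : ∀ i, 0 ≤ w i) (i j : m) :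
    0 ≤ (1 - (α • (1 : Matrix m m ℝ) + ((1 - α) / 2) • (1 - diagonal w * A * diagonal w))) i j := by
  have h : (1 : Matrix m m ℝ) - (α • 1 + ((1 - α) / 2) • (1 - diagonal w * A * diagonal w)) =
      ((1 - α) / 2) • (1 + diagonal w * A * diagonal w) := by
    module
  rw [h, Matrix.smul_apply, Matrix.add_apply, mul_diagonal, diagonal_mul, one_apply, smul_eq_mul]
  have := hA i j
  have := hw i
  have := hw j
  split_ifs <;> positivity

end

theorem ista_support_sets_nested_general {n : ℕ}
    (A : Matrix (Fin n) (Fin n) ℝ)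
    (hAnn : ∀ i j, 0 ≤ A i j)
    (d : Fin n → ℝ)
    (α : ℝ) (hα : α ∈ Set.Ioo (0 : ℝ) 1) (ρ : ℝ) (hρ : 0 < ρ)
    (s : Fin n → ℝ) (hs : ∀ i, 0 ≤ s i)
    (Dinvhalf : Matrix (Fin n) (Fin n) ℝ)
    (hDinvhalf : Dinvhalf = Matrix.diagonal fun i => (Real.sqrt (d i))⁻¹)
    (Q : Matrix (Fin n) (Fin n) ℝ)
    (hQ : Q = α • (1 : Matrix (Fin n) (Fin n) ℝ) +
      ((1 - α) / 2) • ((1 : Matrix (Fin n) (Fin n) ℝ) - Dinvhalf * A * Dinvhalf))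
    (g : (Fin n → ℝ) → (Fin n → ℝ))
    (hg : ∀ q, g q = Q.mulVec q - α • Dinvhalf.mulVec s)
    (q : ℕ → Fin n → ℝ) (hq0 : q 0 = 0)
    (hupd : ∀ k i, q (k + 1) i =
      if ρ * α * Real.sqrt (d i) ≤ q k i - g (q k) i then
        q k i - g (q k) i - ρ * α * Real.sqrt (d i)
      else if q k i - g (q k) i ≤ -(ρ * α * Real.sqrt (d i)) then
        q k i - g (q k) i + ρ * α * Real.sqrt (d i)
      else 0)
    (S : ℕ → Set (Fin n))
    (hS : ∀ k, S k = {i : Fin n | ρ * α * Real.sqrt (d i) ≤ q k i - g (q k) i}) :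
    ∀ k, S k ⊆ S (k + 1) ∧ (S k).ncard ≤ (S (k + 1)).ncard := by
  obtain ⟨hα0, hα1⟩ := hα
  have hτ : ∀ i, 0 ≤ ρ * α * Real.sqrt (d i) := fun i => by positivity
  have hgrad : Monotone fun p => p - g p := by
    subst hDinvhalf hQ
    simpa only [hg] using monotone_sub_mulVec_sub
      (one_sub_pageRank_nonneg hα1.le hAnn fun i => by positivity) _
  have hstep : Monotone fun p i => softThreshold (ρ * α * Real.sqrt (d i)) (p i - g p i) :=
    fun _ _ h i => softThreshold_mono _ (hgrad h i)
  have hq1 : q 0 ≤ q 1 := fun i => by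
    have hgrad0 : 0 ≤ (0 : Fin n → ℝ) i - g 0 i := by
      simp only [Pi.zero_apply, hg, mulVec_zero, hDinvhalf, Pi.sub_apply, Pi.smul_apply,
        mulVec_diagonal, smul_eq_mul, zero_sub, sub_neg_eq_add, zero_add]
      have := hs i
      positivity
    rw [hq0, hupd 0 i, hq0]
    exact (softThreshold_zero (hτ i)).symm.le.trans (softThreshold_mono _ hgrad0)
  have hq : Monotone q := monotone_nat_of_succ_eq_map hstep (fun k => funext (hupd k)) hq1
  intro k
  have hsub : S k ⊆ S (k + 1) := by
    rw [hS, hS]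
    exact fun i hi => hi.trans (hgrad (hq k.le_succ) i)
  exact ⟨hsub, Set.ncard_le_ncard hsub⟩

/-- For the ISTA iteration on the ℓ1-regularized PageRank objective initialized at
`q_0 = 0` with `s ≥ 0` and `‖s‖_∞ ≥ ρ`, the support sets
`S_k = {i : q_k(i) - ∇_i f(q_k) ≥ ρα d_i^{1/2}}` are nested: `S_k ⊆ S_{k+1}` for all
`k`, and hence `|S_k| ≤ |S_{k+1}|`. -/
theorem ista_support_sets_nested {n : ℕ}
    (A : Matrix (Fin n) (Fin n) ℝ) (hA : A.IsSymm)
    (hAnn : ∀ i j, 0 ≤ A i j) (hAdiag : ∀ i, A i i = 0)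
    (d : Fin n → ℝ) (hd : ∀ i, d i = ∑ j, A i j) (hdpos : ∀ i, 0 < d i)
    (α : ℝ) (hα : α ∈ Set.Ioo (0 : ℝ) 1) (ρ : ℝ) (hρ : 0 < ρ)
    (s : Fin n → ℝ) (hs : ∀ i, 0 ≤ s i) (hs1 : ∑ i, s i = 1)
    (hsρ : ∃ i, ρ ≤ |s i|)
    (Dinvhalf : Matrix (Fin n) (Fin n) ℝ)
    (hDinvhalf : Dinvhalf = Matrix.diagonal fun i => (Real.sqrt (d i))⁻¹)
    (Q : Matrix (Fin n) (Fin n) ℝ)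
    (hQ : Q = α • (1 : Matrix (Fin n) (Fin n) ℝ) +
      ((1 - α) / 2) • ((1 : Matrix (Fin n) (Fin n) ℝ) - Dinvhalf * A * Dinvhalf))
    (g : (Fin n → ℝ) → (Fin n → ℝ))
    (hg : ∀ q, g q = Q.mulVec q - α • Dinvhalf.mulVec s)
    (q : ℕ → Fin n → ℝ) (hq0 : q 0 = 0)
    (hupd : ∀ k i, q (k + 1) i =
      if ρ * α * Real.sqrt (d i) ≤ q k i - g (q k) i then
        q k i - g (q k) i - ρ * α * Real.sqrt (d i)
      else if q k i - g (q k) i ≤ -(ρ * α * Real.sqrt (d i)) then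
        q k i - g (q k) i + ρ * α * Real.sqrt (d i)
      else 0)
    (S : ℕ → Set (Fin n))
    (hS : ∀ k, S k = {i : Fin n | ρ * α * Real.sqrt (d i) ≤ q k i - g (q k) i}) :
    ∀ k, S k ⊆ S (k + 1) ∧ (S k).ncard ≤ (S (k + 1)).ncard :=
  ista_support_sets_nested_general A hAnn d α hα ρ hρ s hs Dinvhalf hDinvhalf Q hQ g hg q hq0 hupd S
    hS
end

section
/- For the ISTA iteration on the ℓ1-regularized PageRank objective with the stated initialization, the iterates are monotonically nondecreasing, 0 ≤ q_k ≤ q_{k+1} for all k, and consequently the optimal solution q* = lim q_k satisfies q* ≥ 0. -/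
open Matrix

lemma ista_st_mono (t x y : ℝ) (ht : 0 ≤ t) (h : x ≤ y) :
    (if t ≤ x then x - t else if x ≤ -t then x + t else 0) ≤
      (if t ≤ y then y - t else if y ≤ -t then y + t else 0) := by
  split_ifs <;> linarith

lemma ista_st_nonneg (t x : ℝ) (ht : 0 ≤ t) (hx : 0 ≤ x) :
    (0 : ℝ) ≤ (if t ≤ x then x - t else if x ≤ -t then x + t else 0) := by
  split_ifs <;> linarith

/-- For the ISTA iteration on the ℓ1-regularized PageRank objective with `q_0 = 0`,
`s ≥ 0`, `‖s‖_∞ ≥ ρ`, the iterates are monotonically nondecreasing,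
`0 ≤ q_k ≤ q_{k+1}` for all `k`, and consequently the optimal solution
`q* = lim q_k` (the unique minimizer of `ψ`) satisfies `q* ≥ 0`. -/
theorem ista_iterates_monotone_and_limit_nonneg {n : ℕ}
    (A : Matrix (Fin n) (Fin n) ℝ) (hA : A.IsSymm)
    (hAnn : ∀ i j, 0 ≤ A i j) (hAdiag : ∀ i, A i i = 0)
    (d : Fin n → ℝ) (hd : ∀ i, d i = ∑ j, A i j) (hdpos : ∀ i, 0 < d i)
    (α : ℝ) (hα : α ∈ Set.Ioo (0 : ℝ) 1) (ρ : ℝ) (hρ : 0 < ρ)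
    (s : Fin n → ℝ) (hs : ∀ i, 0 ≤ s i) (hs1 : ∑ i, s i = 1)
    (hsρ : ∃ i, ρ ≤ |s i|)
    (Dinvhalf : Matrix (Fin n) (Fin n) ℝ)
    (hDinvhalf : Dinvhalf = Matrix.diagonal fun i => (Real.sqrt (d i))⁻¹)
    (Q : Matrix (Fin n) (Fin n) ℝ)
    (hQ : Q = α • (1 : Matrix (Fin n) (Fin n) ℝ) +
      ((1 - α) / 2) • ((1 : Matrix (Fin n) (Fin n) ℝ) - Dinvhalf * A * Dinvhalf))
    (g : (Fin n → ℝ) → (Fin n → ℝ))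
    (hg : ∀ q, g q = Q.mulVec q - α • Dinvhalf.mulVec s)
    (f : (Fin n → ℝ) → ℝ)
    (hf : ∀ q, f q = (1 / 2) * (q ⬝ᵥ Q.mulVec q) - α * (s ⬝ᵥ Dinvhalf.mulVec q))
    (ψ : (Fin n → ℝ) → ℝ)
    (hψ : ∀ q, ψ q = ρ * α * ∑ i, Real.sqrt (d i) * |q i| + f q)
    (q : ℕ → Fin n → ℝ) (hq0 : q 0 = 0)
    (hupd : ∀ k i, q (k + 1) i =
      if ρ * α * Real.sqrt (d i) ≤ q k i - g (q k) i then
        q k i - g (q k) i - ρ * α * Real.sqrt (d i)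
      else if q k i - g (q k) i ≤ -(ρ * α * Real.sqrt (d i)) then
        q k i - g (q k) i + ρ * α * Real.sqrt (d i)
      else 0)
    (qstar : Fin n → ℝ)
    (hmin : ∀ p, ψ qstar ≤ ψ p)
    (hconv : Filter.Tendsto q Filter.atTop (nhds qstar)) :
    (∀ k i, 0 ≤ q k i ∧ q k i ≤ q (k + 1) i) ∧ (∀ i, 0 ≤ qstar i) := by
  obtain ⟨hα0, hα1⟩ := hα
  -- entries of M := Dinvhalf * A * Dinvhalf are nonnegative
  have hM : ∀ i j, 0 ≤ (Dinvhalf * A * Dinvhalf) i j := by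
    intro i j
    rw [hDinvhalf]
    rw [Matrix.mul_diagonal, Matrix.diagonal_mul]
    have := hAnn i j
    positivity
  -- formula for p - g p
  have hh : ∀ (p : Fin n → ℝ) (i : Fin n), p i - g p i =
      ((1 - α) / 2) * (p i + ∑ j, (Dinvhalf * A * Dinvhalf) i j * p j)
        + α * Dinvhalf.mulVec s i := by
    intro p i
    rw [hg, hQ]
    simp only [Pi.sub_apply, Matrix.add_mulVec, Matrix.smul_mulVec,
      Matrix.one_mulVec, Matrix.sub_mulVec, Pi.add_apply, Pi.smul_apply,
      smul_eq_mul]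
    have : (Dinvhalf * A * Dinvhalf).mulVec p i
        = ∑ j, (Dinvhalf * A * Dinvhalf) i j * p j := rfl
    rw [this]
    ring
  -- monotonicity of p ↦ p - g p
  have hhmono : ∀ (p r : Fin n → ℝ), (∀ j, p j ≤ r j) →
      ∀ i, p i - g p i ≤ r i - g r i := by
    intro p r hpr i
    rw [hh, hh]
    have hc : (0 : ℝ) ≤ (1 - α) / 2 := by linarith
    have h1 : ∑ j, (Dinvhalf * A * Dinvhalf) i j * p j ≤
        ∑ j, (Dinvhalf * A * Dinvhalf) i j * r j :=
      Finset.sum_le_sum fun j _ => mul_le_mul_of_nonneg_left (hpr j) (hM i j)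
    have h2 := mul_le_mul_of_nonneg_left (add_le_add (hpr i) h1) hc
    linarith
  have ht : ∀ i, 0 ≤ ρ * α * Real.sqrt (d i) := by
    intro i; positivity
  -- q 0 - g (q 0) is nonnegative
  have hbase : ∀ i, (0 : ℝ) ≤ q 0 i - g (q 0) i := by
    intro i
    rw [hh, hq0]
    simp only [Pi.zero_apply, mul_zero, zero_add]
    have : Dinvhalf.mulVec s i = (Real.sqrt (d i))⁻¹ * s i := by
      rw [hDinvhalf, Matrix.mulVec_diagonal]
    rw [this]
    simp only [Finset.sum_const_zero, add_zero, mul_zero]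
    have := hs i
    positivity
  -- monotone step
  have hmono : ∀ k i, q k i ≤ q (k + 1) i := by
    intro k
    induction k with
    | zero =>
      intro i
      rw [hupd, hq0]
      simp only [Pi.zero_apply]
      have := ista_st_nonneg (ρ * α * Real.sqrt (d i)) (q 0 i - g (q 0) i)
        (ht i) (hbase i)
      convert this using 2 <;> rw [hq0] <;> simp
    | succ k ih =>
      intro i
      rw [hupd, hupd]
      exact ista_st_mono _ _ _ (ht i) (hhmono (q k) (q (k + 1)) ih i)
  have hnonneg : ∀ k i, 0 ≤ q k i := by
    intro k
    induction k with
    | zero => intro i; rw [hq0]; rfl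
    | succ k ih => intro i; exact le_trans (ih i) (hmono k i)
  refine ⟨fun k i => ⟨hnonneg k i, hmono k i⟩, fun i => ?_⟩
  have hci : Filter.Tendsto (fun k => q k i) Filter.atTop (nhds (qstar i)) :=
    (tendsto_pi_nhds.mp hconv) i
  exact ge_of_tendsto' hci (fun k => hnonneg k i)
end

section
/- Along the ISTA iteration for the ℓ1-regularized PageRank problem, the quantity ‖D^{1/2}∇f(q_k)‖₁ is monotonically nonincreasing in k; specifically, e^T D^{1/2}∇f(q_{k+1}) = e^T D^{1/2}∇f(q_k) + α e^T D^{1/2} Δ_k where Δ_k = q_{k+1} - q_k ≥ 0 and ∇f(q_k) ≤ 0 for all k. -/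
open Matrix

/-- Along the ISTA iteration for the ℓ1-regularized PageRank problem, the quantity
`‖D^{1/2}∇f(q_k)‖₁` is monotonically nonincreasing in `k`; specifically,
`eᵀD^{1/2}∇f(q_{k+1}) = eᵀD^{1/2}∇f(q_k) + α eᵀD^{1/2}Δ_k` where
`Δ_k = q_{k+1} - q_k ≥ 0` and `∇f(q_k) ≤ 0` for all `k`. -/
theorem scaled_gradient_l1_norm_monotone {n : ℕ}
    (A : Matrix (Fin n) (Fin n) ℝ) (hA : A.IsSymm)
    (hAnn : ∀ i j, 0 ≤ A i j) (hAdiag : ∀ i, A i i = 0)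
    (d : Fin n → ℝ) (hd : ∀ i, d i = ∑ j, A i j) (hdpos : ∀ i, 0 < d i)
    (α : ℝ) (hα : α ∈ Set.Ioo (0 : ℝ) 1)
    (s : Fin n → ℝ) (hs : ∀ i, 0 ≤ s i)
    (Dinvhalf : Matrix (Fin n) (Fin n) ℝ)
    (hDinvhalf : Dinvhalf = Matrix.diagonal fun i => (Real.sqrt (d i))⁻¹)
    (Q : Matrix (Fin n) (Fin n) ℝ)
    (hQ : Q = α • (1 : Matrix (Fin n) (Fin n) ℝ) +
      ((1 - α) / 2) • ((1 : Matrix (Fin n) (Fin n) ℝ) - Dinvhalf * A * Dinvhalf))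
    (g : (Fin n → ℝ) → (Fin n → ℝ))
    (hg : ∀ q, g q = Q.mulVec q - α • Dinvhalf.mulVec s)
    (q : ℕ → Fin n → ℝ) (hq0 : q 0 = 0)
    -- properties of the ISTA iterates established for this initialization:
    (hmono : ∀ k i, q k i ≤ q (k + 1) i)
    (hgneg : ∀ k i, g (q k) i ≤ 0) :
    ∀ k,
      (∑ i, Real.sqrt (d i) * g (q (k + 1)) i) =
        (∑ i, Real.sqrt (d i) * g (q k) i)
          + α * ∑ i, Real.sqrt (d i) * (q (k + 1) i - q k i) ∧
      (∑ i, |Real.sqrt (d i) * g (q (k + 1)) i|) ≤ ∑ i, |Real.sqrt (d i) * g (q k) i| := by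
  have hsqpos : ∀ i, 0 < Real.sqrt (d i) := fun i => Real.sqrt_pos.mpr (hdpos i)
  -- the key cancellation: ∑ᵢ √dᵢ (Qw)ᵢ = α ∑ᵢ √dᵢ wᵢ
  have hQsum : ∀ w : Fin n → ℝ,
      ∑ i, Real.sqrt (d i) * Q.mulVec w i = α * ∑ i, Real.sqrt (d i) * w i := by
    intro w
    have hentry : ∀ i j, (Dinvhalf * A * Dinvhalf) i j
        = (Real.sqrt (d i))⁻¹ * A i j * (Real.sqrt (d j))⁻¹ := by
      intro i j
      subst hDinvhalf
      rw [Matrix.mul_diagonal, Matrix.diagonal_mul]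
    have hM : ∀ i, Real.sqrt (d i) * (Dinvhalf * A * Dinvhalf).mulVec w i
        = ∑ j, A i j * ((Real.sqrt (d j))⁻¹ * w j) := by
      intro i
      rw [Matrix.mulVec, dotProduct, Finset.mul_sum]
      refine Finset.sum_congr rfl fun j _ => ?_
      rw [hentry i j]
      have hne : Real.sqrt (d i) ≠ 0 := (hsqpos i).ne'
      have hnej : Real.sqrt (d j) ≠ 0 := (hsqpos j).ne'
      field_simp
    have hswap : ∑ i, ∑ j, A i j * ((Real.sqrt (d j))⁻¹ * w j)
        = ∑ i, Real.sqrt (d i) * w i := by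
      rw [Finset.sum_comm]
      refine Finset.sum_congr rfl fun j _ => ?_
      rw [← Finset.sum_mul]
      have hcol : ∑ i, A i j = d j := by
        rw [hd j]
        exact Finset.sum_congr rfl fun i _ => hA.apply j i
      rw [hcol]
      rw [show d j * ((Real.sqrt (d j))⁻¹ * w j) = d j / Real.sqrt (d j) * w j by ring,
        Real.div_sqrt]
    have hQi : ∀ i, Q.mulVec w i
        = α * w i + ((1 - α) / 2) * (w i - (Dinvhalf * A * Dinvhalf).mulVec w i) := by
      intro i
      rw [hQ]
      simp [Matrix.add_mulVec, Matrix.sub_mulVec, Matrix.smul_mulVec, mul_sub]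
    calc ∑ i, Real.sqrt (d i) * Q.mulVec w i
        = ∑ i, (α * (Real.sqrt (d i) * w i)
            + ((1 - α) / 2) * (Real.sqrt (d i) * w i
                - Real.sqrt (d i) * (Dinvhalf * A * Dinvhalf).mulVec w i)) := by
          refine Finset.sum_congr rfl fun i _ => ?_
          rw [hQi i]; ring
      _ = α * ∑ i, Real.sqrt (d i) * w i
            + ((1 - α) / 2) * (∑ i, Real.sqrt (d i) * w i
                - ∑ i, Real.sqrt (d i) * (Dinvhalf * A * Dinvhalf).mulVec w i) := by
          rw [Finset.sum_add_distrib, ← Finset.mul_sum, ← Finset.mul_sum,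
            Finset.sum_sub_distrib]
      _ = α * ∑ i, Real.sqrt (d i) * w i := by
          have : ∑ i, Real.sqrt (d i) * (Dinvhalf * A * Dinvhalf).mulVec w i
              = ∑ i, Real.sqrt (d i) * w i := by
            rw [Finset.sum_congr rfl fun i _ => hM i, hswap]
          rw [this]; ring
  intro k
  have hdiff : ∀ i, g (q (k + 1)) i = g (q k) i
      + Q.mulVec (fun j => q (k + 1) j - q k j) i := by
    intro i
    have : (fun j => q (k + 1) j - q k j) = q (k + 1) - q k := rfl
    rw [this, Matrix.mulVec_sub]
    simp [hg]
  have hmain : (∑ i, Real.sqrt (d i) * g (q (k + 1)) i) =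
      (∑ i, Real.sqrt (d i) * g (q k) i)
        + α * ∑ i, Real.sqrt (d i) * (q (k + 1) i - q k i) := by
    rw [← hQsum (fun j => q (k + 1) j - q k j), ← Finset.sum_add_distrib]
    refine Finset.sum_congr rfl fun i _ => ?_
    rw [hdiff i]; ring
  refine ⟨hmain, ?_⟩
  have habs : ∀ m i, |Real.sqrt (d i) * g (q m) i| = -(Real.sqrt (d i) * g (q m) i) := by
    intro m i
    exact abs_of_nonpos (mul_nonpos_of_nonneg_of_nonpos (hsqpos i).le (hgneg m i))
  rw [Finset.sum_congr rfl fun i _ => habs (k + 1) i,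
    Finset.sum_congr rfl fun i _ => habs k i, Finset.sum_neg_distrib,
    Finset.sum_neg_distrib, hmain]
  have : 0 ≤ α * ∑ i, Real.sqrt (d i) * (q (k + 1) i - q k i) := by
    apply mul_nonneg hα.1.le
    apply Finset.sum_nonneg
    intro i _
    exact mul_nonneg (hsqpos i).le (sub_nonneg.mpr (hmono k i))
  linarith
end
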